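/- arXiv:1812.00853 — 5 statements merged into one kernel-verified Lean document; each statement's English description precedes it below -/
import Mathlib

section
/- For every k, j ∈ {1,2,3} and every Q ≠ P, μ ∇² H_{kj}(Q,P) = U_{kj}(Q,P); that is, μ times the Laplacian in Q of the function Q ↦ (1/(32πμ²))(3 r δ_{kj} − R_k R_j / r) equals (1/(8πμ))(δ_{kj}/r + R_k R_j/r³). -/
open Real

/-- Partial derivative of a scalar function on ℝ³ with respect to the `l`-th coordinate. -/
noncomputable def pd3 (f : EuclideanSpace ℝ (Fin 3) → ℝ) (l : Fin 3)
    (Q : EuclideanSpace ℝ (Fin 3)) : ℝ :=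
  fderiv ℝ f Q (EuclideanSpace.single l 1)

private lemma coord_line_hasDerivAt (P Q' v : EuclideanSpace ℝ (Fin 3)) (i : Fin 3) :
    HasDerivAt (fun t : ℝ => (Q' + t • v - P) i) (v i) 0 := by
  have h : (fun t : ℝ => (Q' + t • v - P) i) = fun t : ℝ => (Q' i - P i) + t * v i := by
    funext t
    simp only [PiLp.sub_apply, PiLp.add_apply, PiLp.smul_apply, smul_eq_mul]
    ring
  rw [h]
  simpa using ((hasDerivAt_id (0:ℝ)).mul_const (v i)).const_add (Q' i - P i)

private lemma norm_line_hasDerivAt (P Q' v : EuclideanSpace ℝ (Fin 3)) (h : Q' ≠ P) :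
    HasDerivAt (fun t : ℝ => ‖Q' + t • v - P‖)
      ((∑ i : Fin 3, (Q' - P) i * v i) / ‖Q' - P‖) 0 := by
  have hnorm : ∀ x : EuclideanSpace ℝ (Fin 3), ‖x‖ = Real.sqrt (∑ i : Fin 3, (x i)^2) := by
    intro x
    rw [EuclideanSpace.norm_eq]
    simp [Real.norm_eq_abs, sq_abs]
  have hr : ‖Q' - P‖ ≠ 0 := by simpa [sub_eq_zero] using h
  have hS : HasDerivAt (fun t : ℝ => ∑ i : Fin 3, ((Q' + t • v - P) i)^2)
      (∑ i : Fin 3, 2 * ((Q' - P) i) * v i) 0 := by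
    refine HasDerivAt.fun_sum fun i _ => ?_
    have := (coord_line_hasDerivAt P Q' v i).fun_pow 2
    simpa [zero_smul, mul_comm] using this
  have hS0 : (∑ i : Fin 3, ((Q' + (0:ℝ) • v - P) i)^2) = ∑ i : Fin 3, ((Q' - P) i)^2 := by simp
  have hne : (∑ i : Fin 3, ((Q' + (0:ℝ) • v - P) i)^2) ≠ 0 := by
    rw [hS0]
    have h2 : Real.sqrt (∑ i : Fin 3, ((Q' - P) i)^2) ≠ 0 := by rw [← hnorm]; exact hr
    intro hc; rw [hc] at h2; simp at h2
  have hsqrt := hS.sqrt hne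
  have hfun : (fun t : ℝ => ‖Q' + t • v - P‖)
      = fun t : ℝ => Real.sqrt (∑ i : Fin 3, ((Q' + t • v - P) i)^2) := by
    funext t; exact hnorm _
  rw [hfun]
  convert hsqrt using 1
  rw [hS0, ← hnorm]
  rw [Finset.sum_div, Finset.sum_div]
  refine Finset.sum_congr rfl fun i _ => ?_
  field_simp

private lemma single_line_norm_hasDerivAt (P Q' : EuclideanSpace ℝ (Fin 3)) (l : Fin 3)
    (h : Q' ≠ P) :
    HasDerivAt (fun t : ℝ => ‖Q' + t • (EuclideanSpace.single l 1 : EuclideanSpace ℝ (Fin 3)) - P‖)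
      ((Q' - P) l / ‖Q' - P‖) 0 := by
  have := norm_line_hasDerivAt P Q' (EuclideanSpace.single l 1) h
  convert this using 2
  simp [EuclideanSpace.single_apply, mul_ite, Finset.sum_ite_eq]

private lemma diff_coord (P : EuclideanSpace ℝ (Fin 3)) (k : Fin 3)
    (Q' : EuclideanSpace ℝ (Fin 3)) :
    DifferentiableAt ℝ (fun x : EuclideanSpace ℝ (Fin 3) => (x - P) k) Q' := by
  have h1 : DifferentiableAt ℝ (fun x : EuclideanSpace ℝ (Fin 3) => x k) (Q' - P) :=
    (EuclideanSpace.proj (𝕜 := ℝ) k).differentiableAt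
  exact h1.comp (f := fun x : EuclideanSpace ℝ (Fin 3) => x - P) Q' (differentiableAt_id.sub_const P)

private lemma fderiv_H (c δ : ℝ) (P : EuclideanSpace ℝ (Fin 3)) (k j l : Fin 3)
    (Q' : EuclideanSpace ℝ (Fin 3)) (h : Q' ≠ P) :
    fderiv ℝ (fun Q'' =>
        c * (3 * ‖Q'' - P‖ * δ - (Q'' - P) k * (Q'' - P) j / ‖Q'' - P‖)) Q'
      (EuclideanSpace.single l 1)
    = c * (3 * δ * (Q' - P) l / ‖Q' - P‖
        - ((if k = l then (1:ℝ) else 0) * (Q' - P) j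
            + (if j = l then (1:ℝ) else 0) * (Q' - P) k) / ‖Q' - P‖
        + (Q' - P) k * (Q' - P) j * (Q' - P) l / ‖Q' - P‖ ^ 3) := by
  have hr : ‖Q' - P‖ ≠ 0 := by simpa [sub_eq_zero] using h
  have hdn : DifferentiableAt ℝ (fun x : EuclideanSpace ℝ (Fin 3) => ‖x - P‖) Q' :=
    DifferentiableAt.norm ℝ (differentiableAt_id.sub_const P) (sub_ne_zero.2 h)
  have hd1 : DifferentiableAt ℝ (fun x : EuclideanSpace ℝ (Fin 3) => 3 * ‖x - P‖ * δ) Q' :=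
    (hdn.const_mul 3).mul_const δ
  have hmul : DifferentiableAt ℝ
      (fun x : EuclideanSpace ℝ (Fin 3) => (x - P) k * (x - P) j) Q' :=
    (diff_coord P k Q').mul (diff_coord P j Q')
  have hd2 : DifferentiableAt ℝ
      (fun x : EuclideanSpace ℝ (Fin 3) => (x - P) k * (x - P) j / ‖x - P‖) Q' :=
    by simpa only [div_eq_mul_inv] using hmul.fun_mul (hdn.fun_inv hr)
  have hdiff : DifferentiableAt ℝ (fun Q'' : EuclideanSpace ℝ (Fin 3) =>
      c * (3 * ‖Q'' - P‖ * δ - (Q'' - P) k * (Q'' - P) j / ‖Q'' - P‖)) Q' :=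
    (hd1.sub hd2).const_mul c
  rw [← hdiff.lineDeriv_eq_fderiv]
  have h0 : Q' + (0:ℝ) • (EuclideanSpace.single l 1 : EuclideanSpace ℝ (Fin 3)) - P = Q' - P := by
    simp
  have hn := single_line_norm_hasDerivAt P Q' l h
  have hk := coord_line_hasDerivAt P Q' (EuclideanSpace.single l 1) k
  have hj := coord_line_hasDerivAt P Q' (EuclideanSpace.single l 1) j
  have hne0 : ‖Q' + (0:ℝ) • (EuclideanSpace.single l 1 : EuclideanSpace ℝ (Fin 3)) - P‖ ≠ 0 := by
    rw [h0]; exact hr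
  have chain := (((hn.const_mul 3).mul_const δ).sub ((hk.fun_mul hj).div hn hne0)).const_mul c
  refine chain.deriv.trans ?_
  rw [h0]
  simp only [EuclideanSpace.single_apply]
  field_simp
  ring

private lemma diffAt_div {f g : EuclideanSpace ℝ (Fin 3) → ℝ} {Q : EuclideanSpace ℝ (Fin 3)}
    (hf : DifferentiableAt ℝ f Q) (hg : DifferentiableAt ℝ g Q) (h : g Q ≠ 0) :
    DifferentiableAt ℝ (fun x => f x / g x) Q := by
  simpa only [div_eq_mul_inv] using hf.fun_mul (hg.fun_inv h)

private lemma fderiv_g (c δ : ℝ) (P : EuclideanSpace ℝ (Fin 3)) (k j l : Fin 3)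
    (Q : EuclideanSpace ℝ (Fin 3)) (h : Q ≠ P) :
    fderiv ℝ (fun Q' : EuclideanSpace ℝ (Fin 3) =>
        c * (3 * δ * (Q' - P) l / ‖Q' - P‖
          - ((if k = l then (1:ℝ) else 0) * (Q' - P) j
              + (if j = l then (1:ℝ) else 0) * (Q' - P) k) / ‖Q' - P‖
          + (Q' - P) k * (Q' - P) j * (Q' - P) l / ‖Q' - P‖ ^ 3)) Q
      (EuclideanSpace.single l 1)
    = c * (3 * δ / ‖Q - P‖ + (Q - P) k * (Q - P) j / ‖Q - P‖ ^ 3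
        + (-(3 * δ) / ‖Q - P‖ ^ 3 - 3 * ((Q - P) k * (Q - P) j) / ‖Q - P‖ ^ 5) * ((Q - P) l) ^ 2
        + (-2 / ‖Q - P‖) * ((if k = l then (1:ℝ) else 0) * (if j = l then (1:ℝ) else 0))
        + (2 * (Q - P) j / ‖Q - P‖ ^ 3) * ((if k = l then (1:ℝ) else 0) * (Q - P) l)
        + (2 * (Q - P) k / ‖Q - P‖ ^ 3) * ((if j = l then (1:ℝ) else 0) * (Q - P) l)) := by
  have hr : ‖Q - P‖ ≠ 0 := by simpa [sub_eq_zero] using h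
  have hdn : DifferentiableAt ℝ (fun x : EuclideanSpace ℝ (Fin 3) => ‖x - P‖) Q :=
    DifferentiableAt.norm ℝ (differentiableAt_id.sub_const P) (sub_ne_zero.2 h)
  have t1 : DifferentiableAt ℝ
      (fun x : EuclideanSpace ℝ (Fin 3) => 3 * δ * (x - P) l / ‖x - P‖) Q :=
    diffAt_div ((diff_coord P l Q).const_mul (3 * δ)) hdn hr
  have t2 : DifferentiableAt ℝ
      (fun x : EuclideanSpace ℝ (Fin 3) =>
        ((if k = l then (1:ℝ) else 0) * (x - P) j
          + (if j = l then (1:ℝ) else 0) * (x - P) k) / ‖x - P‖) Q :=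
    diffAt_div (((diff_coord P j Q).const_mul _).add ((diff_coord P k Q).const_mul _)) hdn hr
  have t3 : DifferentiableAt ℝ
      (fun x : EuclideanSpace ℝ (Fin 3) =>
        (x - P) k * (x - P) j * (x - P) l / ‖x - P‖ ^ 3) Q :=
    diffAt_div (((diff_coord P k Q).mul (diff_coord P j Q)).mul (diff_coord P l Q))
      (hdn.pow 3) (pow_ne_zero 3 hr)
  have hdiff := ((t1.fun_sub t2).fun_add t3).const_mul c
  rw [← hdiff.lineDeriv_eq_fderiv]
  have h0 : Q + (0:ℝ) • (EuclideanSpace.single l 1 : EuclideanSpace ℝ (Fin 3)) - P = Q - P := by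
    simp
  have hn := single_line_norm_hasDerivAt P Q l h
  have hk := coord_line_hasDerivAt P Q (EuclideanSpace.single l 1) k
  have hj := coord_line_hasDerivAt P Q (EuclideanSpace.single l 1) j
  have hl := coord_line_hasDerivAt P Q (EuclideanSpace.single l 1) l
  have hne0 : ‖Q + (0:ℝ) • (EuclideanSpace.single l 1 : EuclideanSpace ℝ (Fin 3)) - P‖ ≠ 0 := by
    rw [h0]; exact hr
  have c1 := (hl.const_mul (3 * δ)).div hn hne0
  have c2 := ((hj.const_mul (if k = l then (1:ℝ) else 0)).fun_add
    (hk.const_mul (if j = l then (1:ℝ) else 0))).div hn hne0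
  have c3 := ((hk.fun_mul hj).fun_mul hl).div (hn.fun_pow 3) (pow_ne_zero 3 hne0)
  have chain := ((c1.sub c2).add c3).const_mul c
  refine chain.deriv.trans ?_
  rw [h0]
  simp only [EuclideanSpace.single_apply, if_pos rfl, eq_self_iff_true, if_true]
  set ek := (if k = l then (1:ℝ) else 0) with hek
  set ej := (if j = l then (1:ℝ) else 0) with hej
  set ak := (Q - P) k with hak
  set aj := (Q - P) j with haj
  set al := (Q - P) l with hal
  set r := ‖Q - P‖ with hrr
  field_simp
  ring
/-- μ ∇² H_{kj}(Q,P) = U_{kj}(Q,P) for Q ≠ P. -/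
theorem mu_laplacian_H_eq_stokeslet
    (μ : ℝ) (hμ : 0 < μ) (P : EuclideanSpace ℝ (Fin 3))
    (k j : Fin 3) (Q : EuclideanSpace ℝ (Fin 3)) (hQ : Q ≠ P) :
    μ * (∑ l : Fin 3,
        pd3 (fun Q' =>
          pd3 (fun Q'' =>
            (1 / (32 * π * μ ^ 2)) *
              (3 * ‖Q'' - P‖ * (if k = j then (1 : ℝ) else 0) -
                (Q'' - P) k * (Q'' - P) j / ‖Q'' - P‖)) l Q') l Q) =
      (1 / (8 * π * μ)) *
        ((if k = j then (1 : ℝ) else 0) / ‖Q - P‖ +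
          (Q - P) k * (Q - P) j / ‖Q - P‖ ^ 3) := by
  have hr : ‖Q - P‖ ≠ 0 := by simpa [sub_eq_zero] using hQ
  have hμ0 : μ ≠ 0 := ne_of_gt hμ
  have hπ : (π : ℝ) ≠ 0 := Real.pi_ne_zero
  have hstep : ∀ l : Fin 3,
      pd3 (fun Q' =>
          pd3 (fun Q'' =>
            (1 / (32 * π * μ ^ 2)) *
              (3 * ‖Q'' - P‖ * (if k = j then (1 : ℝ) else 0) -
                (Q'' - P) k * (Q'' - P) j / ‖Q'' - P‖)) l Q') l Q
      = (1 / (32 * π * μ ^ 2)) * (3 * (if k = j then (1 : ℝ) else 0) / ‖Q - P‖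
          + (Q - P) k * (Q - P) j / ‖Q - P‖ ^ 3
          + (-(3 * (if k = j then (1 : ℝ) else 0)) / ‖Q - P‖ ^ 3
              - 3 * ((Q - P) k * (Q - P) j) / ‖Q - P‖ ^ 5) * ((Q - P) l) ^ 2
          + (-2 / ‖Q - P‖) * ((if k = l then (1:ℝ) else 0) * (if j = l then (1:ℝ) else 0))
          + (2 * (Q - P) j / ‖Q - P‖ ^ 3) * ((if k = l then (1:ℝ) else 0) * (Q - P) l)
          + (2 * (Q - P) k / ‖Q - P‖ ^ 3) * ((if j = l then (1:ℝ) else 0) * (Q - P) l)) := by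
    intro l
    unfold pd3
    have hEq : (fun Q' : EuclideanSpace ℝ (Fin 3) =>
        fderiv ℝ (fun Q'' =>
            (1 / (32 * π * μ ^ 2)) *
              (3 * ‖Q'' - P‖ * (if k = j then (1 : ℝ) else 0) -
                (Q'' - P) k * (Q'' - P) j / ‖Q'' - P‖)) Q' (EuclideanSpace.single l 1))
        =ᶠ[nhds Q] (fun Q' : EuclideanSpace ℝ (Fin 3) =>
          (1 / (32 * π * μ ^ 2)) * (3 * (if k = j then (1 : ℝ) else 0) * (Q' - P) l / ‖Q' - P‖
            - ((if k = l then (1:ℝ) else 0) * (Q' - P) j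
                + (if j = l then (1:ℝ) else 0) * (Q' - P) k) / ‖Q' - P‖
            + (Q' - P) k * (Q' - P) j * (Q' - P) l / ‖Q' - P‖ ^ 3)) := by
      filter_upwards [IsOpen.mem_nhds isOpen_ne hQ] with x hx
      exact fderiv_H _ _ P k j l x hx
    rw [hEq.fderiv_eq]
    exact fderiv_g _ _ P k j l Q hQ
  have hS1 : ∑ l : Fin 3, (if k = l then (1:ℝ) else 0) * (if j = l then (1:ℝ) else 0)
      = (if k = j then (1:ℝ) else 0) := by
    fin_cases k <;> fin_cases j <;> simp [Fin.sum_univ_three]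
  have hS2 : ∀ (f : Fin 3 → ℝ) (i : Fin 3),
      ∑ l : Fin 3, (if i = l then (1:ℝ) else 0) * f l = f i := by
    intro f i; simp [ite_mul, Finset.sum_ite_eq]
  have hS3 : ∑ l : Fin 3, ((Q - P) l)^2 = ‖Q - P‖^2 := by
    rw [EuclideanSpace.norm_eq, Real.sq_sqrt (by positivity)]
    simp [Real.norm_eq_abs, sq_abs]
  have expand : ∀ l : Fin 3,
      (1 / (32 * π * μ ^ 2)) * (3 * (if k = j then (1 : ℝ) else 0) / ‖Q - P‖
          + (Q - P) k * (Q - P) j / ‖Q - P‖ ^ 3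
          + (-(3 * (if k = j then (1 : ℝ) else 0)) / ‖Q - P‖ ^ 3
              - 3 * ((Q - P) k * (Q - P) j) / ‖Q - P‖ ^ 5) * ((Q - P) l) ^ 2
          + (-2 / ‖Q - P‖) * ((if k = l then (1:ℝ) else 0) * (if j = l then (1:ℝ) else 0))
          + (2 * (Q - P) j / ‖Q - P‖ ^ 3) * ((if k = l then (1:ℝ) else 0) * (Q - P) l)
          + (2 * (Q - P) k / ‖Q - P‖ ^ 3) * ((if j = l then (1:ℝ) else 0) * (Q - P) l))
      = (1 / (32 * π * μ ^ 2)) * (3 * (if k = j then (1 : ℝ) else 0) / ‖Q - P‖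
          + (Q - P) k * (Q - P) j / ‖Q - P‖ ^ 3)
        + ((1 / (32 * π * μ ^ 2)) * (-(3 * (if k = j then (1 : ℝ) else 0)) / ‖Q - P‖ ^ 3
              - 3 * ((Q - P) k * (Q - P) j) / ‖Q - P‖ ^ 5)) * ((Q - P) l) ^ 2
        + ((1 / (32 * π * μ ^ 2)) * (-2 / ‖Q - P‖))
            * ((if k = l then (1:ℝ) else 0) * (if j = l then (1:ℝ) else 0))
        + ((1 / (32 * π * μ ^ 2)) * (2 * (Q - P) j / ‖Q - P‖ ^ 3))
            * ((if k = l then (1:ℝ) else 0) * (Q - P) l)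
        + ((1 / (32 * π * μ ^ 2)) * (2 * (Q - P) k / ‖Q - P‖ ^ 3))
            * ((if j = l then (1:ℝ) else 0) * (Q - P) l) := by
    intro l; ring
  have hsum_eq := Finset.sum_congr rfl fun l (_ : l ∈ Finset.univ) => (hstep l).trans (expand l)
  rw [hsum_eq]
  simp only [Finset.sum_add_distrib, ← Finset.mul_sum, Finset.sum_const, Finset.card_univ,
    Fintype.card_fin, nsmul_eq_mul, hS1, hS2, hS3]
  set δ := (if k = j then (1:ℝ) else 0) with hδ
  set r := ‖Q - P‖ with hrr
  set ak := (Q - P) k with hak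
  set aj := (Q - P) j with haj
  field_simp
  ring
end

section
/- For every j ∈ {1,2,3} and every Q ≠ P, the j-th column of H is divergence-free in Q: ∑_{k=1}^{3} ∂H_{kj}(Q,P)/∂q_k = 0. -/
open Real

/-!
With `R = Q - P` and `r = ‖R‖` one has `∂ₖ r = Rₖ / r`, so in `n` dimensions the column `j`
of `n r δₖⱼ` has divergence `n Rⱼ / r`, while that of `Rₖ Rⱼ / r` is
`(n + 1) Rⱼ / r - Rⱼ r² / r³ = n Rⱼ / r`. The coefficient `3` in `H` is exactly the
dimension.
-/

open scoped RealInnerProductSpace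

section InnerProductSpace

variable {E : Type*} [NormedAddCommGroup E] [InnerProductSpace ℝ E] {P Q : E}

theorem hasFDerivAt_norm_sub (hQ : Q ≠ P) :
    HasFDerivAt (fun x => ‖x - P‖) (‖Q - P‖⁻¹ • innerSL ℝ (Q - P)) Q := by
  have hr : ‖Q - P‖ ≠ 0 := norm_ne_zero_iff.mpr (sub_ne_zero.mpr hQ)
  have h := (((hasFDerivAt_id Q).sub_const P).norm_sq).sqrt (pow_ne_zero 2 hr)
  simp only [sqrt_sq (norm_nonneg _), id] at h
  refine h.congr_fderiv ?_
  ext v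
  simp only [ContinuousLinearMap.comp_id, smul_apply, innerSL_apply_apply, smul_eq_mul,
    nsmul_eq_mul, Nat.cast_ofNat]
  field_simp

end InnerProductSpace

section EuclideanSpace

variable {ι : Type*} [Fintype ι] {P Q : EuclideanSpace ℝ ι}

theorem hasFDerivAt_apply_sub (m : ι) :
    HasFDerivAt (fun x : EuclideanSpace ℝ ι => (x - P) m)
      (EuclideanSpace.proj m : EuclideanSpace ℝ ι →L[ℝ] ℝ) Q :=
  ((EuclideanSpace.proj m : EuclideanSpace ℝ ι →L[ℝ] ℝ).hasFDerivAt (x := Q)).sub_const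
    (P m)

theorem fderiv_apply_mul_apply_div_norm_sub_apply (hQ : Q ≠ P) (k j : ι)
    (v : EuclideanSpace ℝ ι) :
    fderiv ℝ (fun x => (x - P) k * (x - P) j / ‖x - P‖) Q v =
      (v k * (Q - P) j + (Q - P) k * v j) / ‖Q - P‖ -
        (Q - P) k * (Q - P) j * ⟪Q - P, v⟫ / ‖Q - P‖ ^ 3 := by
  have hr : ‖Q - P‖ ≠ 0 := norm_ne_zero_iff.mpr (sub_ne_zero.mpr hQ)
  have hinv := (hasDerivAt_inv hr).comp_hasFDerivAt Q (hasFDerivAt_norm_sub hQ)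
  have h : HasFDerivAt (fun x : EuclideanSpace ℝ ι => (x - P) k * (x - P) j / ‖x - P‖) _ Q :=
    ((hasFDerivAt_apply_sub k).mul (hasFDerivAt_apply_sub j)).mul hinv
  rw [h.fderiv]
  simp only [add_apply, smul_apply, innerSL_apply_apply, smul_eq_mul, Pi.mul_apply,
    PiLp.proj_apply]
  field_simp
  ring

theorem sum_fderiv_apply_mul_apply_div_norm_sub_single [DecidableEq ι] (hQ : Q ≠ P)
    (j : ι) :
    ∑ k, fderiv ℝ (fun x => (x - P) k * (x - P) j / ‖x - P‖) Q (EuclideanSpace.single k 1) =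
      Fintype.card ι * (Q - P) j / ‖Q - P‖ := by
  have hr : ‖Q - P‖ ≠ 0 := norm_ne_zero_iff.mpr (sub_ne_zero.mpr hQ)
  simp only [fderiv_apply_mul_apply_div_norm_sub_apply hQ, EuclideanSpace.inner_single_right,
    PiLp.single_apply, if_true, one_mul, conj_trivial, mul_ite, mul_one, mul_zero]
  have hsq : ∑ k, (Q - P) k * (Q - P) j * (Q - P) k = (Q - P) j * ‖Q - P‖ ^ 2 := by
    rw [EuclideanSpace.real_norm_sq_eq, Finset.mul_sum]
    exact Finset.sum_congr rfl fun k _ => by ring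
  rw [Finset.sum_sub_distrib, ← Finset.sum_div, ← Finset.sum_div, Finset.sum_add_distrib, hsq,
    Finset.sum_ite_eq, if_pos (Finset.mem_univ j), Finset.sum_const, Finset.card_univ,
    nsmul_eq_mul]
  field_simp
  ring

-- For `ι = Fin 3` and `c = 1 / (32 π μ²)` this is `H_{kj}(x, P)`.
noncomputable def kernelH [DecidableEq ι] (c : ℝ) (P : EuclideanSpace ℝ ι) (k j : ι)
    (x : EuclideanSpace ℝ ι) : ℝ :=
  c * (Fintype.card ι * ‖x - P‖ * (if k = j then 1 else 0) -
    (x - P) k * (x - P) j / ‖x - P‖)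

theorem fderiv_kernelH_single [DecidableEq ι] (hQ : Q ≠ P) (c : ℝ) (k j : ι) :
    fderiv ℝ (kernelH c P k j) Q (EuclideanSpace.single k 1) =
      c * (Fintype.card ι * ((Q - P) k / ‖Q - P‖) * (if k = j then 1 else 0) -
        fderiv ℝ (fun x => (x - P) k * (x - P) j / ‖x - P‖) Q (EuclideanSpace.single k 1)) := by
  have hr : ‖Q - P‖ ≠ 0 := norm_ne_zero_iff.mpr (sub_ne_zero.mpr hQ)
  have hN := hasFDerivAt_norm_sub hQ
  have hF : DifferentiableAt ℝ (fun x => (x - P) k * (x - P) j / ‖x - P‖) Q := by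
    have := hN.differentiableAt
    fun_prop (disch := assumption)
  have h : HasFDerivAt (kernelH c P k j) _ Q :=
    (((hN.const_mul _).mul_const _).sub hF.hasFDerivAt).const_mul c
  rw [h.fderiv]
  simp only [smul_apply, sub_apply, smul_eq_mul, innerSL_apply_apply,
    EuclideanSpace.inner_single_right, one_mul, conj_trivial]
  ring

theorem sum_fderiv_kernelH_single_eq_zero [DecidableEq ι] (hQ : Q ≠ P) (c : ℝ) (j : ι) :
    ∑ k, fderiv ℝ (kernelH c P k j) Q (EuclideanSpace.single k 1) = 0 := by
  simp only [fderiv_kernelH_single hQ, ← Finset.mul_sum, Finset.sum_sub_distrib,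
    sum_fderiv_apply_mul_apply_div_norm_sub_single hQ, mul_ite, mul_one, mul_zero,
    Finset.sum_ite_eq', Finset.mem_univ, if_true]
  ring

end EuclideanSpace

theorem H_column_divergence_free_general
    (μ : ℝ) (P : EuclideanSpace ℝ (Fin 3))
    (j : Fin 3) (Q : EuclideanSpace ℝ (Fin 3)) (hQ : Q ≠ P) :
    (∑ k : Fin 3,
        pd3 (fun Q'' =>
          (1 / (32 * π * μ ^ 2)) *
            (3 * ‖Q'' - P‖ * (if k = j then (1 : ℝ) else 0) -
              (Q'' - P) k * (Q'' - P) j / ‖Q'' - P‖)) k Q) = 0 := by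
  have h := sum_fderiv_kernelH_single_eq_zero hQ (1 / (32 * π * μ ^ 2)) j
  unfold kernelH at h
  rw [Fintype.card_fin, Nat.cast_ofNat] at h
  exact h

/-- Each column of H is divergence-free in Q: ∑_k ∂H_{kj}/∂q_k = 0 for Q ≠ P. -/
theorem H_column_divergence_free
    (μ : ℝ) (hμ : 0 < μ) (P : EuclideanSpace ℝ (Fin 3))
    (j : Fin 3) (Q : EuclideanSpace ℝ (Fin 3)) (hQ : Q ≠ P) :
    (∑ k : Fin 3,
        pd3 (fun Q'' =>
          (1 / (32 * π * μ ^ 2)) *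
            (3 * ‖Q'' - P‖ * (if k = j then (1 : ℝ) else 0) -
              (Q'' - P) k * (Q'' - P) j / ‖Q'' - P‖)) k Q) = 0 :=
  H_column_divergence_free_general μ P j Q hQ
end

section
/- For every unit vector n ∈ ℝ³, every k, j ∈ {1,2,3}, and every Q ≠ P, the directional derivative of Q ↦ H_{kj}(Q,P) in the direction n is bounded in absolute value by 3/(16πμ²); that is, the normal derivative of H remains bounded (merely discontinuous) as Q → P. -/
/-!
Up to the factor `1 / (32πμ²)`, `H_{kj}(·, P)` is `g (Q - P)` with
`g R = 3δ_{kj} ‖R‖ - R_k R_j / ‖R‖`. Away from `0` the derivative of the norm has operator norm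
at most `1`, and differentiating the quotient `R_k R_j / ‖R‖` produces three terms, each of
operator norm at most `1`. Hence `‖Dg‖ ≤ 3 + 3 = 6` and the directional derivative of `H_{kj}`
is at most `6 / (32πμ²) = 3 / (16πμ²)` in absolute value.
-/

open Real

theorem norm_fderiv_norm_le {E : Type*} [NormedAddCommGroup E] [NormedSpace ℝ E] (x : E) :
    ‖fderiv ℝ (‖·‖) x‖ ≤ 1 := by
  simpa using norm_fderiv_le_of_lipschitz ℝ (lipschitzWith_one_norm (E := E)) (x₀ := x)

section

variable {E : Type*} [NormedAddCommGroup E] [InnerProductSpace ℝ E] {x : E}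

theorem hasFDerivAt_mul_div_norm (a b : StrongDual ℝ E) (hx : x ≠ 0) :
    HasFDerivAt (fun y => a y * b y / ‖y‖)
      ((a x * b x) • (-(‖x‖ ^ 2)⁻¹ • fderiv ℝ (‖·‖) x) + ‖x‖⁻¹ • (a x • b + b x • a)) x := by
  have hinv := (hasDerivAt_inv (norm_ne_zero_iff.2 hx)).comp_hasFDerivAt x
    (differentiableAt_id.norm ℝ hx).hasFDerivAt
  simp_rw [div_eq_mul_inv]
  exact (a.hasFDerivAt.mul b.hasFDerivAt).mul hinv

theorem norm_fderiv_mul_div_norm_le (a b : StrongDual ℝ E) (hx : x ≠ 0) :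
    ‖fderiv ℝ (fun y => a y * b y / ‖y‖) x‖ ≤ 3 * ‖a‖ * ‖b‖ := by
  have hr : 0 < ‖x‖ := norm_pos_iff.2 hx
  have hax : ‖a x‖ ≤ ‖a‖ * ‖x‖ := a.le_opNorm x
  have hbx : ‖b x‖ ≤ ‖b‖ * ‖x‖ := b.le_opNorm x
  rw [(hasFDerivAt_mul_div_norm a b hx).fderiv]
  calc _ ≤ ‖a x‖ * ‖b x‖ * ((‖x‖ ^ 2)⁻¹ * ‖fderiv ℝ (‖·‖) x‖)
          + ‖x‖⁻¹ * (‖a x‖ * ‖b‖ + ‖b x‖ * ‖a‖) := by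
        refine (norm_add_le _ _).trans (add_le_add ?_ ?_)
        · rw [norm_smul, norm_mul, norm_smul, norm_neg, norm_inv, norm_pow, norm_norm]
        · rw [norm_smul, norm_inv, norm_norm]
          gcongr
          refine (norm_add_le _ _).trans_eq ?_
          rw [norm_smul, norm_smul]
    _ ≤ ‖a‖ * ‖x‖ * (‖b‖ * ‖x‖) * ((‖x‖ ^ 2)⁻¹ * 1)
          + ‖x‖⁻¹ * (‖a‖ * ‖x‖ * ‖b‖ + ‖b‖ * ‖x‖ * ‖a‖) := by
        gcongr
        exact norm_fderiv_norm_le x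
    _ = 3 * ‖a‖ * ‖b‖ := by field_simp; ring

theorem norm_fderiv_mul_norm_sub_mul_div_norm_le (d : ℝ) (a b : StrongDual ℝ E) (hx : x ≠ 0) :
    ‖fderiv ℝ (fun y => d * ‖y‖ - a y * b y / ‖y‖) x‖ ≤ |d| + 3 * ‖a‖ * ‖b‖ := by
  have hnorm : DifferentiableAt ℝ (‖·‖) x := differentiableAt_id.norm ℝ hx
  rw [fderiv_fun_sub (hnorm.const_mul d) (hasFDerivAt_mul_div_norm a b hx).differentiableAt,
    fderiv_const_mul hnorm]
  refine (norm_sub_le _ _).trans (add_le_add ?_ (norm_fderiv_mul_div_norm_le a b hx))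
  rw [norm_smul, Real.norm_eq_abs]
  exact mul_le_of_le_one_right (abs_nonneg d) (norm_fderiv_norm_le x)

end

theorem EuclideanSpace.norm_proj_le {ι : Type*} [Fintype ι] (i : ι) :
    ‖EuclideanSpace.proj (𝕜 := ℝ) i‖ ≤ 1 :=
  ContinuousLinearMap.opNorm_le_bound _ zero_le_one fun x => by
    simpa using PiLp.norm_apply_le x i

theorem H_directional_derivative_bounded_general
    (μ : ℝ) (P : EuclideanSpace ℝ (Fin 3))
    (n : EuclideanSpace ℝ (Fin 3)) (hn : ‖n‖ = 1)
    (k j : Fin 3) (Q : EuclideanSpace ℝ (Fin 3)) (hQ : Q ≠ P) :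
    |fderiv ℝ (fun Q'' =>
        (1 / (32 * π * μ ^ 2)) *
          (3 * ‖Q'' - P‖ * (if k = j then (1 : ℝ) else 0) -
            (Q'' - P) k * (Q'' - P) j / ‖Q'' - P‖)) Q n| ≤ 3 / (16 * π * μ ^ 2) := by
  set c : ℝ := 1 / (32 * π * μ ^ 2)
  set δ : ℝ := if k = j then 1 else 0
  set g : EuclideanSpace ℝ (Fin 3) → ℝ := fun R =>
    3 * δ * ‖R‖ - EuclideanSpace.proj k R * EuclideanSpace.proj j R / ‖R‖
  have hδ : |δ| ≤ 1 := by unfold δ; split_ifs <;> norm_num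
  have hg : ‖fderiv ℝ g (Q - P)‖ ≤ 6 := calc
    _ ≤ |3 * δ| + 3 * ‖EuclideanSpace.proj (𝕜 := ℝ) k‖ * ‖EuclideanSpace.proj (𝕜 := ℝ) j‖ :=
      norm_fderiv_mul_norm_sub_mul_div_norm_le _ _ _ (sub_ne_zero.2 hQ)
    _ ≤ 3 * 1 + 3 * 1 * 1 := by
      rw [abs_mul, abs_of_pos three_pos]
      gcongr <;> exact EuclideanSpace.norm_proj_le _
    _ = 6 := by norm_num
  have hH : (fun Q'' => c * (3 * ‖Q'' - P‖ * δ - (Q'' - P) k * (Q'' - P) j / ‖Q'' - P‖)) =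
      c • fun Q'' => g (Q'' - P) := by
    funext Q''
    simp only [g, Pi.smul_apply, smul_eq_mul, PiLp.proj_apply]
    ring
  rw [hH, fderiv_const_smul_field, Pi.smul_apply, fderiv_comp_sub, smul_apply, smul_eq_mul,
    abs_mul, abs_of_nonneg (by positivity : 0 ≤ c)]
  calc c * |fderiv ℝ g (Q - P) n| ≤ c * 6 := by
        gcongr
        calc |fderiv ℝ g (Q - P) n| = ‖fderiv ℝ g (Q - P) n‖ := (Real.norm_eq_abs _).symm
          _ ≤ ‖fderiv ℝ g (Q - P)‖ * ‖n‖ := (fderiv ℝ g (Q - P)).le_opNorm n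
          _ ≤ 6 := by rwa [hn, mul_one]
    _ = 3 / (16 * π * μ ^ 2) := by ring

/-- The directional derivative of H_{kj}(·,P) along any unit vector n is bounded in
absolute value by 3/(16πμ²), for every Q ≠ P. -/
theorem H_directional_derivative_bounded
    (μ : ℝ) (hμ : 0 < μ) (P : EuclideanSpace ℝ (Fin 3))
    (n : EuclideanSpace ℝ (Fin 3)) (hn : ‖n‖ = 1)
    (k j : Fin 3) (Q : EuclideanSpace ℝ (Fin 3)) (hQ : Q ≠ P) :
    |fderiv ℝ (fun Q'' =>
        (1 / (32 * π * μ ^ 2)) *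
          (3 * ‖Q'' - P‖ * (if k = j then (1 : ℝ) else 0) -
            (Q'' - P) k * (Q'' - P) j / ‖Q'' - P‖)) Q n| ≤ 3 / (16 * π * μ ^ 2) :=
  H_directional_derivative_bounded_general μ P n hn k j Q hQ
end

section
/- For every k, j ∈ {1,2,3} and every Q ≠ P, the divergence (in Q) of the stress field σ_{kjl}(Q,P) = (1/(16πμ)) [ R_k R_l R_j/r³ + ( R_l δ_{kj} + R_k δ_{jl} − R_j δ_{kl} )/r ] over the index l recovers the Stokeslet: ∑_{l=1}^{3} ∂σ_{kjl}(Q,P)/∂q_l = U_{kj}(Q,P) = (1/(8πμ))(δ_{kj}/r + R_k R_j/r³). -/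
/-!
Work in `ℝⁿ` with `R = Q - P`, `r = ‖R‖`. The classical identity `div (R / r^p) = (n - p) / r^p`
does most of the work: the stress is `R_k R_j · R / r³` plus Kronecker multiples of `R_l / r`,
so its divergence is `2 R_k R_j / r³ + (n - 3) R_k R_j / r³ + (n - 1) δ_kj / r` plus
`∂_j (R_k / r) - ∂_k (R_j / r)`, which vanishes because `∂_j (R_k / r)` is symmetric in `j, k`.
Hence the divergence is `(n - 1) (δ_kj / r + R_k R_j / r³)`, and for `n = 3` the factor `2`
turns `1 / (16πμ)` into `1 / (8πμ)`.
-/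

open Real

section PartialDeriv

variable {ι : Type*} [Fintype ι] [DecidableEq ι]

noncomputable def partialDeriv (f : EuclideanSpace ℝ ι → ℝ) (l : ι) (x : EuclideanSpace ℝ ι) :
    ℝ :=
  fderiv ℝ f x (EuclideanSpace.single l 1)

noncomputable def divergence (F : ι → EuclideanSpace ℝ ι → ℝ) (x : EuclideanSpace ℝ ι) : ℝ :=
  ∑ l, partialDeriv (F l) l x

variable {f g : EuclideanSpace ℝ ι → ℝ} {l : ι} {x : EuclideanSpace ℝ ι}

theorem partialDeriv_comp_sub (a : EuclideanSpace ℝ ι) :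
    partialDeriv (fun y => f (y - a)) l x = partialDeriv f l (x - a) := by
  rw [partialDeriv, fderiv_comp_sub, partialDeriv]

theorem partialDeriv_add (hf : DifferentiableAt ℝ f x) (hg : DifferentiableAt ℝ g x) :
    partialDeriv (fun y => f y + g y) l x = partialDeriv f l x + partialDeriv g l x := by
  rw [partialDeriv, fderiv_fun_add hf hg]; rfl

theorem partialDeriv_sub (hf : DifferentiableAt ℝ f x) (hg : DifferentiableAt ℝ g x) :
    partialDeriv (fun y => f y - g y) l x = partialDeriv f l x - partialDeriv g l x := by
  rw [partialDeriv, fderiv_fun_sub hf hg]; rfl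

theorem partialDeriv_const_mul (c : ℝ) :
    partialDeriv (fun y => c * f y) l x = c * partialDeriv f l x := by
  rw [partialDeriv, show (fun y => c * f y) = c • f from rfl, fderiv_const_smul_field]; rfl

theorem partialDeriv_mul (hf : DifferentiableAt ℝ f x) (hg : DifferentiableAt ℝ g x) :
    partialDeriv (fun y => f y * g y) l x =
      partialDeriv f l x * g x + f x * partialDeriv g l x := by
  rw [partialDeriv, fderiv_fun_mul hf hg]
  simp only [partialDeriv, add_apply, smul_apply, smul_eq_mul]
  ring

theorem partialDeriv_comp {h : ℝ → ℝ} {h' : ℝ} (hh : HasDerivAt h h' (f x))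
    (hf : DifferentiableAt ℝ f x) :
    partialDeriv (fun y => h (f y)) l x = h' * partialDeriv f l x := by
  have hd : HasFDerivAt (fun y => h (f y)) (h' • fderiv ℝ f x) x :=
    hh.comp_hasFDerivAt x hf.hasFDerivAt
  rw [partialDeriv, hd.fderiv]
  rfl

theorem partialDeriv_coord (m : ι) :
    partialDeriv (fun y : EuclideanSpace ℝ ι => y m) l x = if l = m then 1 else 0 := by
  rw [partialDeriv, (PiLp.hasFDerivAt_apply (𝕜 := ℝ) 2 x m).fderiv]
  simp [eq_comm]

theorem partialDeriv_norm_sq :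
    partialDeriv (fun y : EuclideanSpace ℝ ι => ‖y‖ ^ 2) l x = 2 * x l := by
  simp [partialDeriv, EuclideanSpace.inner_single_right]

omit [DecidableEq ι] in
theorem differentiableAt_norm (hx : x ≠ 0) :
    DifferentiableAt ℝ (fun y : EuclideanSpace ℝ ι => ‖y‖) x :=
  (contDiffAt_norm ℝ hx).differentiableAt one_ne_zero

theorem partialDeriv_norm (hx : x ≠ 0) :
    partialDeriv (fun y : EuclideanSpace ℝ ι => ‖y‖) l x = x l / ‖x‖ := by
  have hr : ‖x‖ ≠ 0 := norm_ne_zero_iff.mpr hx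
  have hchain : 2 * x l = 2 * ‖x‖ * partialDeriv (fun y : EuclideanSpace ℝ ι => ‖y‖) l x := by
    rw [← partialDeriv_norm_sq,
      partialDeriv_comp (h := fun t => t ^ 2) (by simpa using hasDerivAt_pow 2 ‖x‖)
        (differentiableAt_norm hx)]
  field_simp
  linarith

theorem partialDeriv_inv_norm_pow (hx : x ≠ 0) (p : ℕ) :
    partialDeriv (fun y : EuclideanSpace ℝ ι => (‖y‖ ^ p)⁻¹) l x =
      -(p * x l / ‖x‖ ^ (p + 2)) := by
  have hr : ‖x‖ ≠ 0 := norm_ne_zero_iff.mpr hx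
  rw [partialDeriv_comp (h := fun t => (t ^ p)⁻¹)
    ((hasDerivAt_pow p ‖x‖).inv (pow_ne_zero p hr)) (differentiableAt_norm hx),
    partialDeriv_norm hx]
  rcases p with _ | p
  · simp
  · rw [Nat.add_sub_cancel]
    field_simp
    ring

omit [DecidableEq ι] in
theorem differentiableAt_coord_div_norm_pow (hx : x ≠ 0) (m : ι) (p : ℕ) :
    DifferentiableAt ℝ (fun y : EuclideanSpace ℝ ι => y m / ‖y‖ ^ p) x := by
  have := differentiableAt_norm hx
  fun_prop (disch := exact pow_ne_zero p (norm_ne_zero_iff.mpr hx))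

theorem partialDeriv_coord_div_norm_pow (hx : x ≠ 0) (m : ι) (p : ℕ) :
    partialDeriv (fun y : EuclideanSpace ℝ ι => y m / ‖y‖ ^ p) l x =
      (if l = m then 1 else 0) / ‖x‖ ^ p - p * x m * x l / ‖x‖ ^ (p + 2) := by
  have hinv : DifferentiableAt ℝ (fun y : EuclideanSpace ℝ ι => (‖y‖ ^ p)⁻¹) x :=
    ((differentiableAt_norm hx).pow p).inv (pow_ne_zero p (norm_ne_zero_iff.mpr hx))
  simp_rw [div_eq_mul_inv]
  rw [partialDeriv_mul (by fun_prop) hinv, partialDeriv_coord, partialDeriv_inv_norm_pow hx]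
  ring

theorem divergence_coord_div_norm_pow (hx : x ≠ 0) (p : ℕ) :
    divergence (fun l y => y l / ‖y‖ ^ p) x = (Fintype.card ι - p) / ‖x‖ ^ p := by
  have hr : ‖x‖ ≠ 0 := norm_ne_zero_iff.mpr hx
  have hsq : ∑ l, x l * x l = ‖x‖ ^ 2 := by
    rw [EuclideanSpace.real_norm_sq_eq]; simp only [sq]
  simp only [divergence, partialDeriv_coord_div_norm_pow hx, if_true, Finset.sum_sub_distrib,
    Finset.sum_const, Finset.card_univ, nsmul_eq_mul, mul_assoc, ← Finset.mul_sum,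
    ← Finset.sum_div, hsq]
  field_simp
  ring

end PartialDeriv

section StokesletStress

variable {ι : Type*} [Fintype ι] [DecidableEq ι] {x : EuclideanSpace ℝ ι}

/-- `σ_{kjl}` at `R = y`, without the factor `1 / (16πμ)`. -/
noncomputable def stokesletStress (k j l : ι) (y : EuclideanSpace ℝ ι) : ℝ :=
  y k * y l * y j / ‖y‖ ^ 3 +
    (y l * (if k = j then 1 else 0) + y k * (if j = l then 1 else 0) -
      y j * (if k = l then 1 else 0)) / ‖y‖

theorem partialDeriv_stokesletStress_self (hx : x ≠ 0) (k j l : ι) :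
    partialDeriv (stokesletStress k j l) l x =
      ((if l = k then 1 else 0) * x j + x k * (if l = j then 1 else 0)) * (x l / ‖x‖ ^ 3) +
        x k * x j * partialDeriv (fun y => y l / ‖y‖ ^ 3) l x +
        ((if k = j then 1 else 0) * partialDeriv (fun y => y l / ‖y‖ ^ 1) l x +
          (if j = l then 1 else 0) * partialDeriv (fun y => y k / ‖y‖ ^ 1) l x -
          (if k = l then 1 else 0) * partialDeriv (fun y => y j / ‖y‖ ^ 1) l x) := by
  have hsplit : stokesletStress k j l = fun y => y k * y j * (y l / ‖y‖ ^ 3) +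
      ((if k = j then 1 else 0) * (y l / ‖y‖ ^ 1) + (if j = l then 1 else 0) * (y k / ‖y‖ ^ 1) -
        (if k = l then 1 else 0) * (y j / ‖y‖ ^ 1)) := by
    funext y; simp only [stokesletStress]; ring
  have hd := differentiableAt_coord_div_norm_pow hx
  rw [hsplit, partialDeriv_add (by fun_prop) (by fun_prop), partialDeriv_mul (by fun_prop) (hd _ _),
    partialDeriv_mul (by fun_prop) (by fun_prop), partialDeriv_sub (by fun_prop) (by fun_prop),
    partialDeriv_add (by fun_prop) (by fun_prop), partialDeriv_const_mul, partialDeriv_const_mul,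
    partialDeriv_const_mul, partialDeriv_coord, partialDeriv_coord]

theorem divergence_stokesletStress (hx : x ≠ 0) (k j : ι) :
    divergence (fun l => stokesletStress k j l) x =
      (Fintype.card ι - 1) * ((if k = j then 1 else 0) / ‖x‖ + x k * x j / ‖x‖ ^ 3) := by
  have hprod : ∑ l, ((if l = k then 1 else 0) * x j + x k * (if l = j then 1 else 0)) *
      (x l / ‖x‖ ^ 3) = 2 * (x k * x j / ‖x‖ ^ 3) := by
    simp only [add_mul, ite_mul, mul_ite, one_mul, zero_mul, mul_one, mul_zero,
      Finset.sum_add_distrib, Finset.sum_ite_eq', Finset.mem_univ, if_true]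
    ring
  have hsymm : partialDeriv (fun y => y k / ‖y‖ ^ 1) j x =
      partialDeriv (fun y => y j / ‖y‖ ^ 1) k x := by
    simp only [partialDeriv_coord_div_norm_pow hx, eq_comm (a := j)]
    ring
  calc divergence (fun l => stokesletStress k j l) x
      = 2 * (x k * x j / ‖x‖ ^ 3) + x k * x j * divergence (fun l y => y l / ‖y‖ ^ 3) x +
          ((if k = j then 1 else 0) * divergence (fun l y => y l / ‖y‖ ^ 1) x +
            partialDeriv (fun y => y k / ‖y‖ ^ 1) j x -
            partialDeriv (fun y => y j / ‖y‖ ^ 1) k x) := by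
        simp only [divergence, partialDeriv_stokesletStress_self hx, Finset.sum_add_distrib,
          Finset.sum_sub_distrib, ← Finset.mul_sum, hprod]
        simp only [ite_mul, one_mul, zero_mul, Finset.sum_ite_eq, Finset.mem_univ, if_true]
    _ = _ := by
        rw [divergence_coord_div_norm_pow hx, divergence_coord_div_norm_pow hx, hsymm]
        field_simp
        ring

end StokesletStress

theorem stress_divergence_eq_stokeslet_general
    (μ : ℝ) (P : EuclideanSpace ℝ (Fin 3))
    (k j : Fin 3) (Q : EuclideanSpace ℝ (Fin 3)) (hQ : Q ≠ P) :
    (∑ l : Fin 3,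
        pd3 (fun Q'' =>
          (1 / (16 * π * μ)) *
            ((Q'' - P) k * (Q'' - P) l * (Q'' - P) j / ‖Q'' - P‖ ^ 3 +
              ((Q'' - P) l * (if k = j then (1 : ℝ) else 0) +
                (Q'' - P) k * (if j = l then (1 : ℝ) else 0) -
                (Q'' - P) j * (if k = l then (1 : ℝ) else 0)) / ‖Q'' - P‖)) l Q) =
      (1 / (8 * π * μ)) *
        ((if k = j then (1 : ℝ) else 0) / ‖Q - P‖ +
          (Q - P) k * (Q - P) j / ‖Q - P‖ ^ 3) := by
  have hR : Q - P ≠ 0 := sub_ne_zero.mpr hQ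
  calc _ = ∑ l : Fin 3, 1 / (16 * π * μ) * partialDeriv (stokesletStress k j l) l (Q - P) :=
        Finset.sum_congr rfl fun l _ =>
          (partialDeriv_const_mul _).trans
            (congrArg _ (partialDeriv_comp_sub (f := stokesletStress k j l) P))
    _ = 1 / (16 * π * μ) * divergence (fun l => stokesletStress k j l) (Q - P) := by
        rw [divergence, Finset.mul_sum]
    _ = _ := by
        rw [divergence_stokesletStress hR, Fintype.card_fin]
        ring

/-- The divergence (in Q, over the index l) of the stress field
σ_{kjl} = (1/(16πμ)) [ R_k R_l R_j/r³ + ( R_l δ_{kj} + R_k δ_{jl} − R_j δ_{kl} )/r ]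
recovers the Stokeslet U_{kj}. -/
theorem stress_divergence_eq_stokeslet
    (μ : ℝ) (hμ : 0 < μ) (P : EuclideanSpace ℝ (Fin 3))
    (k j : Fin 3) (Q : EuclideanSpace ℝ (Fin 3)) (hQ : Q ≠ P) :
    (∑ l : Fin 3,
        pd3 (fun Q'' =>
          (1 / (16 * π * μ)) *
            ((Q'' - P) k * (Q'' - P) l * (Q'' - P) j / ‖Q'' - P‖ ^ 3 +
              ((Q'' - P) l * (if k = j then (1 : ℝ) else 0) +
                (Q'' - P) k * (if j = l then (1 : ℝ) else 0) -
                (Q'' - P) j * (if k = l then (1 : ℝ) else 0)) / ‖Q'' - P‖)) l Q) =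
      (1 / (8 * π * μ)) *
        ((if k = j then (1 : ℝ) else 0) / ‖Q - P‖ +
          (Q - P) k * (Q - P) j / ‖Q - P‖ ^ 3) :=
  stress_divergence_eq_stokeslet_general μ P k j Q hQ
end

section
/- For every k, j ∈ {1,2} and every Q ≠ P in ℝ², the Laplacian in Q of H̃_{kj} equals the 2D Stokeslet: ∇² [ (1/32)( δ_{kj} r² (17 − 12 log r) + 2 R_k R_j (4 log r − 5) ) ] = −δ_{kj} log r + R_k R_j/r². -/
/-!
Write R = Q − P. Translation commutes with partial derivatives, so everything is a
computation in R. The chain rule for ‖R‖² and log ‖R‖ gives ∂_l H̃_{kj} in closed form;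
differentiating it once more along the same coordinate and summing over l, the identities
∑_l R_l² = r² and ∑_l δ_{kl} δ_{jl} = δ_{kj} collapse the result to the Stokeslet.
-/

open Real

/-- Partial derivative of a scalar function on ℝ² with respect to the `l`-th coordinate. -/
noncomputable def pd2 (f : EuclideanSpace ℝ (Fin 2) → ℝ) (l : Fin 2)
    (Q : EuclideanSpace ℝ (Fin 2)) : ℝ :=
  fderiv ℝ f Q (EuclideanSpace.single l 1)

section InnerProductSpace
variable {F : Type*} [NormedAddCommGroup F] [InnerProductSpace ℝ F] {x : F}

theorem hasFDerivAt_log_norm (hx : x ≠ 0) :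
    HasFDerivAt (fun y : F => log ‖y‖) ((‖x‖ ^ 2)⁻¹ • innerSL ℝ x) x := by
  have hx2 : ‖x‖ ^ 2 ≠ 0 := by positivity
  have hlog : (fun y : F => log ‖y‖) = fun y => 1 / 2 * log (‖y‖ ^ 2) := by
    ext y; rw [Real.log_pow]; push_cast; ring
  rw [hlog]
  have h := ((hasStrictFDerivAt_norm_sq x).hasFDerivAt.log hx2).const_mul (1 / 2)
  refine h.congr_fderiv ?_
  ext y
  simp only [one_div, smul_apply, coe_innerSL_apply, nsmul_eq_mul, Nat.cast_ofNat, smul_eq_mul]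
  ring

theorem hasFDerivAt_inv_norm_sq (hx : x ≠ 0) :
    HasFDerivAt (fun y : F => (‖y‖ ^ 2)⁻¹) (-(2 / ‖x‖ ^ 4) • innerSL ℝ x) x := by
  have hx2 : ‖x‖ ^ 2 ≠ 0 := by positivity
  have h := (hasFDerivAt_inv hx2).comp x (hasStrictFDerivAt_norm_sq x).hasFDerivAt
  refine h.congr_fderiv ?_
  ext y
  simp only [ContinuousLinearMap.comp_apply, ContinuousLinearMap.toSpanSingleton_apply,
    smul_apply, coe_innerSL_apply, nsmul_eq_mul, Nat.cast_ofNat, smul_eq_mul]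
  ring

end InnerProductSpace

section Euclidean
variable {x : EuclideanSpace ℝ (Fin 2)} {l : Fin 2}

theorem pd2_eq_of_hasFDerivAt {f : EuclideanSpace ℝ (Fin 2) → ℝ}
    {f' : EuclideanSpace ℝ (Fin 2) →L[ℝ] ℝ} (h : HasFDerivAt f f' x) :
    pd2 f l x = f' (EuclideanSpace.single l 1) := by
  rw [pd2, h.fderiv]

theorem pd2_congr_of_eventuallyEq {f g : EuclideanSpace ℝ (Fin 2) → ℝ}
    (h : f =ᶠ[nhds x] g) : pd2 f l x = pd2 g l x := by
  rw [pd2, pd2, h.fderiv_eq]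

theorem pd2_comp_sub (f : EuclideanSpace ℝ (Fin 2) → ℝ) (P : EuclideanSpace ℝ (Fin 2)) :
    pd2 (fun Q => f (Q - P)) l x = pd2 f l (x - P) := by
  rw [pd2, pd2, fderiv_comp_sub]

end Euclidean

local notation "δ[" a ", " b "]" => if a = b then (1 : ℝ) else 0

/-- `stokesH k j (Q - P)` is H̃_{kj}(Q, P). -/
noncomputable def stokesH (k j : Fin 2) (x : EuclideanSpace ℝ (Fin 2)) : ℝ :=
  (1 / 32) * (δ[k, j] * ‖x‖ ^ 2 * (17 - 12 * log ‖x‖) + 2 * x k * x j * (4 * log ‖x‖ - 5))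

noncomputable def stokesHGrad (k j l : Fin 2) (x : EuclideanSpace ℝ (Fin 2)) : ℝ :=
  (1 / 32) * (2 * δ[k, j] * x l * (11 - 12 * log ‖x‖) +
    2 * (δ[k, l] * x j + δ[j, l] * x k) * (4 * log ‖x‖ - 5) + 8 * x k * x j * x l * (‖x‖ ^ 2)⁻¹)

theorem pd2_stokesH {x : EuclideanSpace ℝ (Fin 2)} (hx : x ≠ 0) (k j l : Fin 2) :
    pd2 (stokesH k j) l x = stokesHGrad k j l x := by
  have hn := (hasStrictFDerivAt_norm_sq x).hasFDerivAt
  have hL := hasFDerivAt_log_norm hx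
  have hc := fun i => (EuclideanSpace.proj (𝕜 := ℝ) (ι := Fin 2) i).hasFDerivAt (x := x)
  have hH := (((hn.const_mul δ[k, j]).mul ((hL.const_mul 12).const_sub 17)).add
    ((((hc k).const_mul 2).mul (hc j)).mul ((hL.const_mul 4).sub_const 5))).const_mul (1 / 32 : ℝ)
  rw [pd2_eq_of_hasFDerivAt (f := stokesH k j) hH]
  have hx2 : ‖x‖ ^ 2 ≠ 0 := by positivity
  simp only [stokesHGrad, add_apply, neg_apply, FunLike.coe_smul, Pi.smul_apply, smul_eq_mul,
    innerSL_apply_apply, EuclideanSpace.inner_single_right, conj_trivial, PiLp.proj_apply,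
    PiLp.single_apply, one_mul, Pi.mul_apply]
  field_simp
  ring

theorem pd2_stokesHGrad_self {x : EuclideanSpace ℝ (Fin 2)} (hx : x ≠ 0) (k j l : Fin 2) :
    pd2 (stokesHGrad k j l) l x =
      (1 / 32) * (2 * δ[k, j] * (11 - 12 * log ‖x‖) - 24 * δ[k, j] * x l ^ 2 / ‖x‖ ^ 2 +
        4 * δ[k, l] * δ[j, l] * (4 * log ‖x‖ - 5) +
        16 * (δ[k, l] * x j + δ[j, l] * x k) * x l / ‖x‖ ^ 2 +
        8 * x k * x j / ‖x‖ ^ 2 - 16 * x k * x j * x l ^ 2 / ‖x‖ ^ 4) := by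
  have hL := hasFDerivAt_log_norm hx
  have hI := hasFDerivAt_inv_norm_sq hx
  have hc := fun i => (EuclideanSpace.proj (𝕜 := ℝ) (ι := Fin 2) i).hasFDerivAt (x := x)
  have hG := (((((hc l).const_mul (2 * δ[k, j])).mul ((hL.const_mul 12).const_sub 11)).add
    (((((hc j).const_mul δ[k, l]).add ((hc k).const_mul δ[j, l])).const_mul 2).mul
      ((hL.const_mul 4).sub_const 5))).add
    (((((hc k).const_mul 8).mul (hc j)).mul (hc l)).mul hI)).const_mul (1 / 32 : ℝ)
  rw [pd2_eq_of_hasFDerivAt (f := stokesHGrad k j l) hG]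
  have hx2 : ‖x‖ ^ 2 ≠ 0 := by positivity
  simp only [add_apply, neg_apply, FunLike.coe_smul, Pi.smul_apply, smul_eq_mul,
    innerSL_apply_apply, EuclideanSpace.inner_single_right, conj_trivial, PiLp.proj_apply,
    PiLp.single_apply, one_mul, Pi.mul_apply, Pi.add_apply, if_true, mul_one]
  field_simp
  ring

theorem sum_pd2_stokesHGrad_self {x : EuclideanSpace ℝ (Fin 2)} (hx : x ≠ 0) (k j : Fin 2) :
    ∑ l, pd2 (stokesHGrad k j l) l x = -δ[k, j] * log ‖x‖ + x k * x j / ‖x‖ ^ 2 := by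
  have hx2 : ‖x‖ ^ 2 ≠ 0 := by positivity
  have hn : ‖x‖ ^ 2 = x 0 ^ 2 + x 1 ^ 2 := by
    rw [EuclideanSpace.real_norm_sq_eq, Fin.sum_univ_two]
  simp only [Fin.sum_univ_two, pd2_stokesHGrad_self hx]
  rw [show ‖x‖ ^ 4 = (‖x‖ ^ 2) ^ 2 by ring]
  fin_cases k <;> fin_cases j <;>
    simp only [Fin.zero_eta, Fin.mk_one, Fin.isValue, zero_ne_one, one_ne_zero, ↓reduceIte] <;>
    field_simp <;> rw [hn] <;> ring

theorem sum_pd2_pd2_stokesH {x : EuclideanSpace ℝ (Fin 2)} (hx : x ≠ 0) (k j : Fin 2) :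
    ∑ l, pd2 (pd2 (stokesH k j) l) l x = -δ[k, j] * log ‖x‖ + x k * x j / ‖x‖ ^ 2 := by
  have hgrad (l : Fin 2) : pd2 (stokesH k j) l =ᶠ[nhds x] stokesHGrad k j l := by
    filter_upwards [isOpen_ne.mem_nhds hx] with y hy using pd2_stokesH hy k j l
  simp only [pd2_congr_of_eventuallyEq (hgrad _)]
  exact sum_pd2_stokesHGrad_self hx k j

/-- The Laplacian in Q of the 2D H̃-function equals the (unnormalized) 2D Stokeslet:
∇² H̃_{kj} = −δ_{kj} log r + R_k R_j/r². -/
theorem twoD_laplacian_H_eq_stokeslet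
    (P : EuclideanSpace ℝ (Fin 2))
    (k j : Fin 2) (Q : EuclideanSpace ℝ (Fin 2)) (hQ : Q ≠ P) :
    (∑ l : Fin 2,
        pd2 (fun Q' =>
          pd2 (fun Q'' =>
            (1 / 32) *
              ((if k = j then (1 : ℝ) else 0) * ‖Q'' - P‖ ^ 2 *
                  (17 - 12 * Real.log ‖Q'' - P‖) +
                2 * (Q'' - P) k * (Q'' - P) j * (4 * Real.log ‖Q'' - P‖ - 5))) l Q') l Q) =
      -(if k = j then (1 : ℝ) else 0) * Real.log ‖Q - P‖ +
        (Q - P) k * (Q - P) j / ‖Q - P‖ ^ 2 := by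
  change ∑ l, pd2 (fun Q' => pd2 (fun Q'' => stokesH k j (Q'' - P)) l Q') l Q = _
  simp only [pd2_comp_sub]
  exact sum_pd2_pd2_stokesH (sub_ne_zero.mpr hQ) k j
end
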